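/- Beckner convolution estimate: for 1 < p < q < ∞, 1 < s_k < p'/q' for k = 1,2, with 1/q + 2/p' = 1/s₁ + 1/s₂ and 2 < p'/q', the bilinear convolution-type operator A[V,f,g](x) = ∫∫ V(x−y₁, x−y₂) f(y₁) g(y₂) dy₁ dy₂ satisfies ‖A[V,f,g]‖_{L^q(ℝ^d)} ≤ ‖V‖_{L^p(ℝ^{2d})} ‖f‖_{L^{s₁}(ℝ^d)} ‖g‖_{L^{s₂}(ℝ^d)}. -/

import Mathlib

open MeasureTheory Real Complex ENNReal

noncomputable section

/-!
The operator is dominated pointwise by the same operator applied to `‖V‖`, `‖f‖`, `‖g‖`, so it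
suffices to treat nonnegative `W, F, H`. By duality in `L^q`, one must bound
`∫∫∫ W(x - y, x - z) F(y) H(z) φ(x)` by `‖W‖_p ‖F‖_{s₁} ‖H‖_{s₂} ‖φ‖_{q'}`. Write the integrand
as the product of the four blocks
`(W^p F^{s₁})^{θ₀} (W^p H^{s₂})^{θ₁} (W^p φ^{q'})^{θ₂} (φ^{q'} F^{s₁} H^{s₂})^{θ₃}` with
`θ₀ = 1/s₁ - 1/p'`, `θ₁ = 1/s₂ - 1/p'`, `θ₂ = 1/p - 1/q`, `θ₃ = 1/p'`; the exponent relation makes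
these weights nonnegative with sum `1`, and each letter appears to total power one. Hölder's
inequality over `G³` then concludes, because every block integral factors into norms: for the
first three after the measure-preserving change of variables `(x, y, z) ↦ ((x - y, x - z), ·)`.
-/

theorem AEMeasurable.exists_measurable_ge_ae_eq {α β : Type*} [MeasurableSpace α]
    [MeasurableSpace β] [Preorder β] [OrderTop β] {μ : Measure α} {f : α → β}
    (hf : AEMeasurable f μ) : ∃ g : α → β, Measurable g ∧ f ≤ g ∧ f =ᵐ[μ] g := by
  classical
  set N := toMeasurable μ {x | f x ≠ hf.mk f x}
  have hN : ∀ᵐ x ∂μ, x ∉ N := measure_eq_zero_iff_ae_notMem.1 <| by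
    rw [measure_toMeasurable]; exact hf.ae_eq_mk
  refine ⟨N.piecewise (fun _ => ⊤) (hf.mk f),
    measurable_const.piecewise (measurableSet_toMeasurable _ _) hf.measurable_mk,
    fun x => ?_, ?_⟩
  · by_cases hx : x ∈ N
    · simp [hx]
    · rw [Set.piecewise_eq_of_notMem _ _ _ hx]
      exact (not_not.1 fun h => hx (subset_toMeasurable _ _ h)).le
  · filter_upwards [hf.ae_eq_mk, hN] with x hx hxN
    simp [hxN, hx]

theorem enorm_mul_le {R : Type*} [NonUnitalSeminormedRing R] (a b : R) :
    ‖a * b‖ₑ ≤ ‖a‖ₑ * ‖b‖ₑ := by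
  simpa only [enorm, ← ENNReal.coe_mul, ENNReal.coe_le_coe] using nnnorm_mul_le a b

theorem eLpNorm_ofReal_eq_lintegral {α ε : Type*} [MeasurableSpace α] [ENorm ε]
    {μ : Measure α} (f : α → ε) {q : ℝ} (hq : 0 < q) :
    eLpNorm f (ENNReal.ofReal q) μ = (∫⁻ x, ‖f x‖ₑ ^ q ∂μ) ^ (1 / q) := by
  rw [eLpNorm_eq_lintegral_rpow_enorm_toReal (by simpa using hq) ofReal_ne_top,
    toReal_ofReal hq.le]

section Duality

variable {α : Type*} [MeasurableSpace α] {ν : Measure α} {Φ Ψ : α → ℝ≥0∞} {M : ℝ≥0∞}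
  {q q' : ℝ}

theorem lintegral_rpow_le_of_le_of_forall_lintegral_mul_le (hqq' : q.HolderConjugate q')
    (hΨ : Measurable Ψ) (hΨΦ : Ψ ≤ Φ) (hΨ_fin : ∫⁻ x, Ψ x ^ q ∂ν ≠ ∞)
    (H : ∀ φ, Measurable φ → ∫⁻ x, Φ x * φ x ∂ν ≤ M * (∫⁻ x, φ x ^ q' ∂ν) ^ (1 / q')) :
    (∫⁻ x, Ψ x ^ q ∂ν) ^ (1 / q) ≤ M := by
  set I := ∫⁻ x, Ψ x ^ q ∂ν
  have hI : I ≤ M * I ^ (1 / q') := calc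
    I = ∫⁻ x, Ψ x * Ψ x ^ (q - 1) ∂ν := by
        refine lintegral_congr fun x => ?_
        conv_lhs => rw [← add_sub_cancel 1 q]
        rw [ENNReal.rpow_add_of_nonneg _ _ zero_le_one hqq'.sub_one_pos.le, ENNReal.rpow_one]
    _ ≤ ∫⁻ x, Φ x * Ψ x ^ (q - 1) ∂ν := lintegral_mono fun x => mul_le_mul_left (hΨΦ x) _
    _ ≤ M * (∫⁻ x, (Ψ x ^ (q - 1)) ^ q' ∂ν) ^ (1 / q') := H _ (hΨ.pow_const _)
    _ = M * I ^ (1 / q') := by simp_rw [← ENNReal.rpow_mul, hqq'.sub_one_mul_conj]; rfl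
  rcases eq_or_ne I 0 with hI0 | hI0
  · rw [hI0, ENNReal.zero_rpow_of_pos (one_div_pos.2 hqq'.pos)]; exact bot_le
  have hsplit : I ^ (1 / q) * I ^ (1 / q') = I := by
    rw [← ENNReal.rpow_add _ _ hI0 hΨ_fin, one_div, one_div, hqq'.inv_add_inv_eq_one,
      ENNReal.rpow_one]
  refine (ENNReal.mul_le_mul_iff_left ?_ ?_).1 (hsplit.le.trans hI)
  · exact (ENNReal.rpow_pos (pos_iff_ne_zero.2 hI0) hΨ_fin).ne'
  · exact ENNReal.rpow_ne_top_of_nonneg (one_div_pos.2 hqq'.symm.pos).le hΨ_fin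

theorem lintegral_rpow_le_of_forall_lintegral_mul_le [SigmaFinite ν]
    (hqq' : q.HolderConjugate q') (hΦ : Measurable Φ)
    (H : ∀ φ, Measurable φ → ∫⁻ x, Φ x * φ x ∂ν ≤ M * (∫⁻ x, φ x ^ q' ∂ν) ^ (1 / q')) :
    (∫⁻ x, Φ x ^ q ∂ν) ^ (1 / q) ≤ M := by
  have hq := hqq'.pos
  -- truncations of `Φ` have finite `L^q` norm, so the previous lemma applies to them
  set c : ℕ → α → ℝ≥0∞ := fun n => (spanningSets ν n).indicator fun _ => n
  set Ψ : ℕ → α → ℝ≥0∞ := fun n => Φ ⊓ c n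
  have hc_mono : Monotone c := fun m n hmn x =>
    (Set.indicator_le_indicator_of_subset (monotone_spanningSets ν hmn) (fun _ => bot_le) x).trans
      (Set.indicator_le_indicator (Nat.cast_le.2 hmn))
  have hc_top : ∀ x, ⨆ n, c n x = ⊤ := by
    intro x
    obtain ⟨N, hN⟩ := Set.mem_iUnion.1 (iUnion_spanningSets ν ▸ Set.mem_univ x)
    refine iSup_eq_top.2 fun b hb => ?_
    obtain ⟨m, hm⟩ := ENNReal.exists_nat_gt hb.ne
    refine ⟨max N m, hm.trans_le ?_⟩
    simp only [c, Set.indicator_of_mem (monotone_spanningSets ν (le_max_left N m) hN)]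
    exact Nat.cast_le.2 (le_max_right N m)
  have hΨ_sup : ∀ x, ⨆ n, Ψ n x = Φ x := fun x => by
    simp only [Ψ, Pi.inf_apply, ← inf_iSup_eq, hc_top, inf_top_eq]
  have hΨ_meas : ∀ n, Measurable (Ψ n) := fun n =>
    hΦ.inf (measurable_const.indicator (measurableSet_spanningSets ν n))
  have hΨ_fin : ∀ n, ∫⁻ x, Ψ n x ^ q ∂ν ≠ ∞ := by
    intro n
    refine ne_top_of_le_ne_top ?_ (lintegral_mono (g := (spanningSets ν n).indicator
      fun _ => (n : ℝ≥0∞) ^ q) fun x => ?_)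
    · rw [lintegral_indicator_const (measurableSet_spanningSets ν n)]
      exact ENNReal.mul_ne_top (ENNReal.rpow_ne_top_of_nonneg hq.le (ENNReal.natCast_ne_top n))
        (measure_spanningSets_lt_top ν n).ne
    · by_cases hx : x ∈ spanningSets ν n
      · simp only [Ψ, c, Pi.inf_apply, Set.indicator_of_mem hx]
        exact ENNReal.rpow_le_rpow inf_le_right hq.le
      · simp [Ψ, c, hx, ENNReal.zero_rpow_of_pos hq]
  have hΦ_eq : ∫⁻ x, Φ x ^ q ∂ν = ⨆ n, ∫⁻ x, Ψ n x ^ q ∂ν := by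
    rw [← lintegral_iSup (fun n => (hΨ_meas n).pow_const q)
      (fun m n hmn x => ENNReal.rpow_le_rpow (inf_le_inf_left _ (hc_mono hmn x)) hq.le)]
    refine lintegral_congr fun x => ?_
    rw [← hΨ_sup x]
    exact (ENNReal.orderIsoRpow q hq).map_iSup _
  rw [one_div, ENNReal.rpow_inv_le_iff hq, hΦ_eq]
  refine iSup_le fun n => (ENNReal.rpow_inv_le_iff hq).1 ?_
  rw [← one_div]
  exact lintegral_rpow_le_of_le_of_forall_lintegral_mul_le hqq' (hΨ_meas n)
    (fun x => inf_le_left) (hΨ_fin n) H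

end Duality

section FourBlocks

variable {θ₀ θ₁ θ₂ θ₃ P S₁ S₂ Q : ℝ}

theorem ENNReal.lintegral_mul_rpow_four_le {α : Type*} [MeasurableSpace α] {μ : Measure α}
    {f₀ f₁ f₂ f₃ : α → ℝ≥0∞} (hf₀ : AEMeasurable f₀ μ) (hf₁ : AEMeasurable f₁ μ)
    (hf₂ : AEMeasurable f₂ μ) (hf₃ : AEMeasurable f₃ μ)
    (h₀ : 0 ≤ θ₀) (h₁ : 0 ≤ θ₁) (h₂ : 0 ≤ θ₂) (h₃ : 0 ≤ θ₃) (hθ : θ₀ + θ₁ + θ₂ + θ₃ = 1) :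
    ∫⁻ a, f₀ a ^ θ₀ * f₁ a ^ θ₁ * f₂ a ^ θ₂ * f₃ a ^ θ₃ ∂μ ≤
      (∫⁻ a, f₀ a ∂μ) ^ θ₀ * (∫⁻ a, f₁ a ∂μ) ^ θ₁ * (∫⁻ a, f₂ a ∂μ) ^ θ₂ *
        (∫⁻ a, f₃ a ∂μ) ^ θ₃ := by
  simpa [Fin.prod_univ_four] using ENNReal.lintegral_prod_norm_pow_le (μ := μ) Finset.univ
    (f := ![f₀, f₁, f₂, f₃]) (p := ![θ₀, θ₁, θ₂, θ₃])
    (fun i _ => by fin_cases i <;> assumption) (by simpa [Fin.sum_univ_four] using hθ)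
    (fun i _ => by fin_cases i <;> assumption)

theorem ENNReal.rpow_four_blocks_eq_mul (a b c e : ℝ≥0∞)
    (h₀ : 0 ≤ θ₀) (h₁ : 0 ≤ θ₁) (h₂ : 0 ≤ θ₂) (h₃ : 0 ≤ θ₃)
    (hPθ : P * (θ₀ + θ₁ + θ₂) = 1) (hS₁θ : S₁ * (θ₀ + θ₃) = 1)
    (hS₂θ : S₂ * (θ₁ + θ₃) = 1) (hQθ : Q * (θ₂ + θ₃) = 1) :
    (a ^ P * b ^ S₁) ^ θ₀ * (a ^ P * c ^ S₂) ^ θ₁ * (a ^ P * e ^ Q) ^ θ₂ *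
      (e ^ Q * (b ^ S₁ * c ^ S₂)) ^ θ₃ = a * b * c * e := by
  have hP := pos_of_mul_pos_left (hPθ ▸ one_pos) (by positivity)
  have hS₁ := pos_of_mul_pos_left (hS₁θ ▸ one_pos) (by positivity)
  have hS₂ := pos_of_mul_pos_left (hS₂θ ▸ one_pos) (by positivity)
  have hQ := pos_of_mul_pos_left (hQθ ▸ one_pos) (by positivity)
  have split₂ : ∀ (x : ℝ≥0∞) (u v : ℝ), 0 ≤ u → 0 ≤ v → u + v = 1 → x ^ u * x ^ v = x :=
    fun x u v hu hv h => by rw [← ENNReal.rpow_add_of_nonneg _ _ hu hv, h, ENNReal.rpow_one]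
  have split₃ : ∀ (x : ℝ≥0∞) (u v w : ℝ), 0 ≤ u → 0 ≤ v → 0 ≤ w → u + v + w = 1 →
      x ^ u * x ^ v * x ^ w = x := fun x u v w hu hv hw h => by
    rw [← ENNReal.rpow_add_of_nonneg _ _ hu hv, split₂ x _ _ (add_nonneg hu hv) hw h]
  simp only [ENNReal.mul_rpow_of_nonneg _ _ h₀, ENNReal.mul_rpow_of_nonneg _ _ h₁,
    ENNReal.mul_rpow_of_nonneg _ _ h₂, ENNReal.mul_rpow_of_nonneg _ _ h₃, ← ENNReal.rpow_mul]
  calc _ = (a ^ (P * θ₀) * a ^ (P * θ₁) * a ^ (P * θ₂)) * (b ^ (S₁ * θ₀) * b ^ (S₁ * θ₃)) *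
        (c ^ (S₂ * θ₁) * c ^ (S₂ * θ₃)) * (e ^ (Q * θ₂) * e ^ (Q * θ₃)) := by ring
    _ = a * b * c * e := by
        rw [split₃ a _ _ _ (by positivity) (by positivity) (by positivity)
            (by linear_combination hPθ),
          split₂ b _ _ (by positivity) (by positivity) (by linear_combination hS₁θ),
          split₂ c _ _ (by positivity) (by positivity) (by linear_combination hS₂θ),
          split₂ e _ _ (by positivity) (by positivity) (by linear_combination hQθ)]

theorem ENNReal.rpow_four_blocks_eq_mul_rpow (A B C E : ℝ≥0∞)
    (h₀ : 0 ≤ θ₀) (h₁ : 0 ≤ θ₁) (h₂ : 0 ≤ θ₂) (h₃ : 0 ≤ θ₃)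
    (hPθ : P * (θ₀ + θ₁ + θ₂) = 1) (hS₁θ : S₁ * (θ₀ + θ₃) = 1)
    (hS₂θ : S₂ * (θ₁ + θ₃) = 1) (hQθ : Q * (θ₂ + θ₃) = 1) :
    (A * B) ^ θ₀ * (A * C) ^ θ₁ * (A * E) ^ θ₂ * (E * (B * C)) ^ θ₃ =
      A ^ (1 / P) * B ^ (1 / S₁) * C ^ (1 / S₂) * E ^ (1 / Q) := by
  have root : ∀ (I : ℝ≥0∞) {X Y : ℝ}, X * Y = 1 → (I ^ (1 / X)) ^ X = I := fun I X Y h => by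
    rw [← ENNReal.rpow_mul, one_div_mul_cancel (left_ne_zero_of_mul_eq_one h), ENNReal.rpow_one]
  conv_lhs => rw [← root A hPθ, ← root B hS₁θ, ← root C hS₂θ, ← root E hQθ]
  exact ENNReal.rpow_four_blocks_eq_mul _ _ _ _ h₀ h₁ h₂ h₃ hPθ hS₁θ hS₂θ hQθ

end FourBlocks

theorem MeasureTheory.MeasurePreserving.lintegral_comp_fst_mul_comp_snd {α β γ : Type*}
    [MeasurableSpace α] [MeasurableSpace β] [MeasurableSpace γ] {μ : Measure α} {ν : Measure β}
    {ρ : Measure γ} [SFinite ρ] {T : α → β × γ} (hT : MeasurePreserving T μ (ν.prod ρ))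
    {w : β → ℝ≥0∞} {h : γ → ℝ≥0∞} (hw : Measurable w) (hh : Measurable h) :
    ∫⁻ a, w (T a).1 * h (T a).2 ∂μ = (∫⁻ b, w b ∂ν) * ∫⁻ c, h c ∂ρ := by
  rw [← lintegral_prod_mul hw.aemeasurable hh.aemeasurable]
  exact hT.lintegral_comp (f := fun z => w z.1 * h z.2) (by fun_prop)

section Group

variable {G : Type*} [MeasurableSpace G] [AddCommGroup G] [MeasurableAdd₂ G] [MeasurableNeg G]

/-- The operator `A[W, F, H]` for nonnegative `W`, `F`, `H`. -/
def lconv₂ (μ : Measure G) (W : G × G → ℝ≥0∞) (F H : G → ℝ≥0∞) (x : G) : ℝ≥0∞ :=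
  ∫⁻ y, ∫⁻ z, W (x - y, x - z) * F y * H z ∂μ ∂μ

section SFinite

variable {μ : Measure G} [SFinite μ] {W : G × G → ℝ≥0∞} {F H φ : G → ℝ≥0∞}

theorem measurable_lconv₂ (hW : Measurable W) (hF : Measurable F) (hH : Measurable H) :
    Measurable (lconv₂ μ W F H) := by
  have h : Measurable fun p : (G × G) × G => W (p.1.1 - p.1.2, p.1.1 - p.2) * F p.1.2 * H p.2 :=
    by fun_prop
  exact h.lintegral_prod_right'.lintegral_prod_right'

theorem lintegral_lconv₂_mul (hW : Measurable W) (hF : Measurable F) (hH : Measurable H)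
    (hφ : Measurable φ) :
    ∫⁻ x, lconv₂ μ W F H x * φ x ∂μ =
      ∫⁻ a, W (a.1 - a.2.1, a.1 - a.2.2) * F a.2.1 * H a.2.2 * φ a.1 ∂μ.prod (μ.prod μ) := by
  rw [lintegral_prod _ (by fun_prop)]
  refine lintegral_congr fun x => ?_
  have hyz : Measurable fun yz : G × G => W (x - yz.1, x - yz.2) * F yz.1 * H yz.2 := by
    fun_prop
  rw [lconv₂, ← lintegral_mul_const _ hyz.lintegral_prod_right', lintegral_prod _ (by fun_prop)]
  exact lintegral_congr fun y => (lintegral_mul_const _ (by fun_prop)).symm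

variable (μ) [μ.IsAddLeftInvariant] [μ.IsNegInvariant]

theorem measurePreserving_sub_sub_fst :
    MeasurePreserving (fun a : G × G × G => ((a.1 - a.2.1, a.1 - a.2.2), a.1))
      (μ.prod (μ.prod μ)) ((μ.prod μ).prod μ) :=
  Measure.measurePreserving_swap.comp <| (MeasurePreserving.id μ).skew_product
    (g := fun x (yz : G × G) => (x - yz.1, x - yz.2)) (by fun_prop)
    (ae_of_all _ fun x => ((Measure.measurePreserving_sub_left μ x).prod
      (Measure.measurePreserving_sub_left μ x)).map_eq)

theorem measurePreserving_sub_sub_snd :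
    MeasurePreserving (fun a : G × G × G => ((a.1 - a.2.1, a.1 - a.2.2), a.2.1))
      (μ.prod (μ.prod μ)) ((μ.prod μ).prod μ) := by
  simpa [Function.comp_def] using ((MeasurePreserving.id (μ.prod μ)).skew_product
    (g := fun w x => x - w.1) (by fun_prop)
    (ae_of_all _ fun w => (measurePreserving_sub_right μ w.1).map_eq)).comp
    (measurePreserving_sub_sub_fst μ)

theorem measurePreserving_sub_sub_thd :
    MeasurePreserving (fun a : G × G × G => ((a.1 - a.2.1, a.1 - a.2.2), a.2.2))
      (μ.prod (μ.prod μ)) ((μ.prod μ).prod μ) := by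
  simpa [Function.comp_def] using ((MeasurePreserving.id (μ.prod μ)).skew_product
    (g := fun w x => x - w.2) (by fun_prop)
    (ae_of_all _ fun w => (measurePreserving_sub_right μ w.2).map_eq)).comp
    (measurePreserving_sub_sub_fst μ)

variable {μ}

theorem lintegral_lconv₂_mul_le (hW : Measurable W) (hF : Measurable F) (hH : Measurable H)
    (hφ : Measurable φ) {P S₁ S₂ Q θ₀ θ₁ θ₂ θ₃ : ℝ}
    (h₀ : 0 ≤ θ₀) (h₁ : 0 ≤ θ₁) (h₂ : 0 ≤ θ₂) (h₃ : 0 ≤ θ₃) (hθ : θ₀ + θ₁ + θ₂ + θ₃ = 1)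
    (hPθ : P * (θ₀ + θ₁ + θ₂) = 1) (hS₁θ : S₁ * (θ₀ + θ₃) = 1)
    (hS₂θ : S₂ * (θ₁ + θ₃) = 1) (hQθ : Q * (θ₂ + θ₃) = 1) :
    ∫⁻ x, lconv₂ μ W F H x * φ x ∂μ ≤
      (∫⁻ w, W w ^ P ∂μ.prod μ) ^ (1 / P) * (∫⁻ y, F y ^ S₁ ∂μ) ^ (1 / S₁) *
        (∫⁻ z, H z ^ S₂ ∂μ) ^ (1 / S₂) * (∫⁻ x, φ x ^ Q ∂μ) ^ (1 / Q) := by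
  have I₀ : ∫⁻ a, W (a.1 - a.2.1, a.1 - a.2.2) ^ P * F a.2.1 ^ S₁ ∂μ.prod (μ.prod μ) =
      (∫⁻ w, W w ^ P ∂μ.prod μ) * ∫⁻ y, F y ^ S₁ ∂μ :=
    (measurePreserving_sub_sub_snd μ).lintegral_comp_fst_mul_comp_snd (hW.pow_const P)
      (hF.pow_const S₁)
  have I₁ : ∫⁻ a, W (a.1 - a.2.1, a.1 - a.2.2) ^ P * H a.2.2 ^ S₂ ∂μ.prod (μ.prod μ) =
      (∫⁻ w, W w ^ P ∂μ.prod μ) * ∫⁻ z, H z ^ S₂ ∂μ :=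
    (measurePreserving_sub_sub_thd μ).lintegral_comp_fst_mul_comp_snd (hW.pow_const P)
      (hH.pow_const S₂)
  have I₂ : ∫⁻ a, W (a.1 - a.2.1, a.1 - a.2.2) ^ P * φ a.1 ^ Q ∂μ.prod (μ.prod μ) =
      (∫⁻ w, W w ^ P ∂μ.prod μ) * ∫⁻ x, φ x ^ Q ∂μ :=
    (measurePreserving_sub_sub_fst μ).lintegral_comp_fst_mul_comp_snd (hW.pow_const P)
      (hφ.pow_const Q)
  have I₃ : ∫⁻ a, φ a.1 ^ Q * (F a.2.1 ^ S₁ * H a.2.2 ^ S₂) ∂μ.prod (μ.prod μ) =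
      (∫⁻ x, φ x ^ Q ∂μ) * ((∫⁻ y, F y ^ S₁ ∂μ) * ∫⁻ z, H z ^ S₂ ∂μ) := by
    rw [← lintegral_prod_mul (hF.pow_const S₁).aemeasurable (hH.pow_const S₂).aemeasurable]
    exact lintegral_prod_mul (μ := μ) (ν := μ.prod μ) (f := fun x => φ x ^ Q)
      (g := fun yz : G × G => F yz.1 ^ S₁ * H yz.2 ^ S₂) (by fun_prop) (by fun_prop)
  rw [lintegral_lconv₂_mul hW hF hH hφ, lintegral_congr fun a =>
    (ENNReal.rpow_four_blocks_eq_mul _ _ _ _ h₀ h₁ h₂ h₃ hPθ hS₁θ hS₂θ hQθ).symm]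
  refine (ENNReal.lintegral_mul_rpow_four_le (by fun_prop) (by fun_prop) (by fun_prop)
    (by fun_prop) h₀ h₁ h₂ h₃ hθ).trans_eq ?_
  rw [I₀, I₁, I₂, I₃]
  exact ENNReal.rpow_four_blocks_eq_mul_rpow _ _ _ _ h₀ h₁ h₂ h₃ hPθ hS₁θ hS₂θ hQθ

end SFinite

variable {μ : Measure G} [SigmaFinite μ] [μ.IsAddLeftInvariant] [μ.IsNegInvariant]

theorem lintegral_lconv₂_rpow_le {W : G × G → ℝ≥0∞} {F H : G → ℝ≥0∞} (hW : Measurable W)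
    (hF : Measurable F) (hH : Measurable H) {p q s₁ s₂ : ℝ} (hp : 1 ≤ p) (hpq : p ≤ q)
    (hq : 1 < q) (hs₁ : 0 < s₁) (hs₂ : 0 < s₂) (hs₁p : 1 - p⁻¹ ≤ s₁⁻¹) (hs₂p : 1 - p⁻¹ ≤ s₂⁻¹)
    (hsum : s₁⁻¹ + s₂⁻¹ = q⁻¹ + 2 * (1 - p⁻¹)) :
    (∫⁻ x, lconv₂ μ W F H x ^ q ∂μ) ^ (1 / q) ≤
      (∫⁻ w, W w ^ p ∂μ.prod μ) ^ (1 / p) * (∫⁻ y, F y ^ s₁ ∂μ) ^ (1 / s₁) *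
        (∫⁻ z, H z ^ s₂ ∂μ) ^ (1 / s₂) := by
  have hp₀ : 0 < p := one_pos.trans_le hp
  have hqq' := Real.HolderConjugate.conjExponent hq
  refine lintegral_rpow_le_of_forall_lintegral_mul_le hqq' (measurable_lconv₂ hW hF hH)
    fun φ hφ => lintegral_lconv₂_mul_le hW hF hH hφ (θ₀ := s₁⁻¹ - (1 - p⁻¹))
      (θ₁ := s₂⁻¹ - (1 - p⁻¹)) (θ₂ := p⁻¹ - q⁻¹) (θ₃ := 1 - p⁻¹) (sub_nonneg.2 hs₁p)
      (sub_nonneg.2 hs₂p) (sub_nonneg.2 (inv_anti₀ hp₀ hpq))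
      (sub_nonneg.2 (inv_le_one_of_one_le₀ hp)) (by linarith) ?_ ?_ ?_ ?_
  · rw [show s₁⁻¹ - (1 - p⁻¹) + (s₂⁻¹ - (1 - p⁻¹)) + (p⁻¹ - q⁻¹) = p⁻¹ by linarith,
      mul_inv_cancel₀ hp₀.ne']
  · rw [sub_add_cancel, mul_inv_cancel₀ hs₁.ne']
  · rw [sub_add_cancel, mul_inv_cancel₀ hs₂.ne']
  · rw [show p⁻¹ - q⁻¹ + (1 - p⁻¹) = 1 - q⁻¹ by ring, hqq'.one_sub_inv,
      mul_inv_cancel₀ hqq'.symm.ne_zero]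

theorem eLpNorm_integral_integral_sub_sub_le {R : Type*} [NormedRing R] [NormedSpace ℝ R]
    {V : G × G → R} {f g : G → R} (hV : AEStronglyMeasurable V (μ.prod μ))
    (hf : AEStronglyMeasurable f μ) (hg : AEStronglyMeasurable g μ) {p q s₁ s₂ : ℝ}
    (hp : 1 ≤ p) (hpq : p ≤ q) (hq : 1 < q) (hs₁ : 0 < s₁) (hs₂ : 0 < s₂)
    (hs₁p : 1 - p⁻¹ ≤ s₁⁻¹) (hs₂p : 1 - p⁻¹ ≤ s₂⁻¹)
    (hsum : s₁⁻¹ + s₂⁻¹ = q⁻¹ + 2 * (1 - p⁻¹)) :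
    eLpNorm (fun x => ∫ y, ∫ z, V (x - y, x - z) * f y * g z ∂μ ∂μ) (ENNReal.ofReal q) μ ≤
      eLpNorm V (ENNReal.ofReal p) (μ.prod μ) * eLpNorm f (ENNReal.ofReal s₁) μ *
        eLpNorm g (ENNReal.ofReal s₂) μ := by
  -- majorants, rather than a.e. representatives, keep the pointwise bound free of null sets
  obtain ⟨W, hW, hVW, hVW_ae⟩ := hV.enorm.exists_measurable_ge_ae_eq
  obtain ⟨F, hF, hfF, hfF_ae⟩ := hf.enorm.exists_measurable_ge_ae_eq
  obtain ⟨H, hH, hgH, hgH_ae⟩ := hg.enorm.exists_measurable_ge_ae_eq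
  have hpoint (x : G) :
      ‖∫ y, ∫ z, V (x - y, x - z) * f y * g z ∂μ ∂μ‖ₑ ≤ lconv₂ μ W F H x := calc
    _ ≤ ∫⁻ y, ‖∫ z, V (x - y, x - z) * f y * g z ∂μ‖ₑ ∂μ := enorm_integral_le_lintegral_enorm _
    _ ≤ ∫⁻ y, ∫⁻ z, ‖V (x - y, x - z) * f y * g z‖ₑ ∂μ ∂μ :=
        lintegral_mono fun y => enorm_integral_le_lintegral_enorm _
    _ ≤ lconv₂ μ W F H x := lintegral_mono fun y => lintegral_mono fun z =>
        (enorm_mul_le _ _).trans <| mul_le_mul' ((enorm_mul_le _ _).trans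
          (mul_le_mul' (hVW _) (hfF y))) (hgH z)
  rw [eLpNorm_ofReal_eq_lintegral _ (one_pos.trans hq),
    eLpNorm_ofReal_eq_lintegral _ (one_pos.trans_le hp), eLpNorm_ofReal_eq_lintegral _ hs₁,
    eLpNorm_ofReal_eq_lintegral _ hs₂,
    lintegral_congr_ae (hVW_ae.mono fun _ h => congrArg (· ^ p) h),
    lintegral_congr_ae (hfF_ae.mono fun _ h => congrArg (· ^ s₁) h),
    lintegral_congr_ae (hgH_ae.mono fun _ h => congrArg (· ^ s₂) h)]
  calc _ ≤ (∫⁻ x, lconv₂ μ W F H x ^ q ∂μ) ^ (1 / q) := by gcongr with x; exact hpoint x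
    _ ≤ _ := lintegral_lconv₂_rpow_le hW hF hH hp hpq hq hs₁ hs₂ hs₁p hs₂p hsum

end Group

theorem stmt5_general (d : ℕ) (p q s₁ s₂ : ℝ)
    (hp : 1 < p) (hpq : p < q)
    (hs₁ : 1 < s₁ ∧ s₁ < (p/(p-1))/(q/(q-1)))
    (hs₂ : 1 < s₂ ∧ s₂ < (p/(p-1))/(q/(q-1)))
    (hsum : 1/q + 2/(p/(p-1)) = 1/s₁ + 1/s₂)
    (V : EuclideanSpace ℝ (Fin d) × EuclideanSpace ℝ (Fin d) → ℂ)
    (f g : EuclideanSpace ℝ (Fin d) → ℂ)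
    (hV : MemLp V (ENNReal.ofReal p) volume)
    (hf : MemLp f (ENNReal.ofReal s₁) volume)
    (hg : MemLp g (ENNReal.ofReal s₂) volume) :
    eLpNorm (fun x => ∫ y, ∫ z, V (x - y, x - z) * f y * g z) (ENNReal.ofReal q) volume ≤
      eLpNorm V (ENNReal.ofReal p) volume * eLpNorm f (ENNReal.ofReal s₁) volume *
        eLpNorm g (ENNReal.ofReal s₂) volume := by
  have hpp' : p.HolderConjugate (p / (p - 1)) := .conjExponent hp
  have hqq' : q.HolderConjugate (q / (q - 1)) := .conjExponent (hp.trans hpq)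
  have hs_le (s : ℝ) (hs₀ : 0 < s) (hs : s < (p / (p - 1)) / (q / (q - 1))) :
      1 - p⁻¹ ≤ s⁻¹ := by
    rw [hpp'.one_sub_inv]
    exact inv_anti₀ hs₀ (hs.le.trans (div_le_self hpp'.symm.nonneg hqq'.symm.lt.le))
  have hs₁₀ : 0 < s₁ := one_pos.trans hs₁.1
  have hs₂₀ : 0 < s₂ := one_pos.trans hs₂.1
  rw [one_div, div_eq_mul_inv, ← hpp'.one_sub_inv, one_div, one_div] at hsum
  exact eLpNorm_integral_integral_sub_sub_le hV.1 hf.1 hg.1 hp.le hpq.le (hp.trans hpq)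
    hs₁₀ hs₂₀ (hs_le s₁ hs₁₀ hs₁.2) (hs_le s₂ hs₂₀ hs₂.2) (by linarith)

/-- Beckner's convolution estimate: for `1 < p < q < ∞`, `1 < s_k < p'/q'`,
`1/q + 2/p' = 1/s₁ + 1/s₂` and `2 < p'/q'`, one has
`‖A[V,f,g]‖_{L^q} ≤ ‖V‖_{L^p(ℝ^{2d})} ‖f‖_{L^{s₁}} ‖g‖_{L^{s₂}}`. -/
theorem stmt5 (d : ℕ) (hd : 0 < d) (p q s₁ s₂ : ℝ)
    (hp : 1 < p) (hpq : p < q)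
    (hs₁ : 1 < s₁ ∧ s₁ < (p/(p-1))/(q/(q-1)))
    (hs₂ : 1 < s₂ ∧ s₂ < (p/(p-1))/(q/(q-1)))
    (hsum : 1/q + 2/(p/(p-1)) = 1/s₁ + 1/s₂)
    (hcone : 2 < (p/(p-1))/(q/(q-1)))
    (V : EuclideanSpace ℝ (Fin d) × EuclideanSpace ℝ (Fin d) → ℂ)
    (f g : EuclideanSpace ℝ (Fin d) → ℂ)
    (hV : MemLp V (ENNReal.ofReal p) volume)
    (hf : MemLp f (ENNReal.ofReal s₁) volume)
    (hg : MemLp g (ENNReal.ofReal s₂) volume) :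
    eLpNorm (fun x => ∫ y, ∫ z, V (x - y, x - z) * f y * g z) (ENNReal.ofReal q) volume ≤
      eLpNorm V (ENNReal.ofReal p) volume * eLpNorm f (ENNReal.ofReal s₁) volume *
        eLpNorm g (ENNReal.ofReal s₂) volume :=
  stmt5_general d p q s₁ s₂ hp hpq hs₁ hs₂ hsum V f g hV hf hg
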